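/- arXiv:2004.14097 — 7 statements merged into one kernel-verified Lean document; each statement's English description precedes it below -/
import Mathlib

section
/- Let K ⊆ ℝ^n be an origin-symmetric convex body and let L ⊆ ℝ^n be a k-dimensional linear subspace with dim(span(L ∩ ℤ^n)) = k, where 0 ≤ k ≤ n-1. Then for every t ∈ ℝ^n, #(K ∩ (t + L)) ≤ 2^k · #(K ∩ L). -/
/-!
Points of `K ∩ (t + L) ∩ ℤⁿ` differ by elements of the lattice `Λ = L ∩ ℤⁿ`, of rank `k`.
Sort them by the class of `x - x₀` in `Λ / 2Λ`, which has `2ᵏ` elements. If `x` and `y` lie in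
the same class then `x - y = 2u` with `u ∈ Λ`, and `u = (x + (-y)) / 2 ∈ K` by symmetry and
convexity; for fixed `y` the map `x ↦ u` is injective, so each class has at most `#(K ∩ L)`
points.
-/

/-- The lattice point enumerator: the number of integer points in `A ⊆ ℝ^n`. -/
noncomputable def latCount {n : ℕ} (A : Set (Fin n → ℝ)) : ℕ :=
  (A ∩ {x : Fin n → ℝ | ∀ i, ∃ z : ℤ, x i = (z : ℝ)}).ncard

open Module Submodule
open scoped Finset

section Parity

variable {ι M : Type*} [AddCommGroup M]

noncomputable def parityClass (b : Basis ι ℤ M) (v : M) : ι → ZMod 2 :=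
  fun i => (b.repr v i : ZMod 2)

theorem exists_sub_eq_two_zsmul_of_parityClass_eq [Fintype ι] (b : Basis ι ℤ M) {v w : M}
    (h : parityClass b v = parityClass b w) : ∃ u, v - w = (2 : ℤ) • u := by
  have hdvd : ∀ i, (2 : ℤ) ∣ b.repr (v - w) i := fun i => by
    rw [map_sub, Finsupp.sub_apply]
    exact (ZMod.intCast_eq_intCast_iff_dvd_sub _ _ _).mp (congrFun h i).symm
  refine ⟨∑ i, (b.repr (v - w) i / 2) • b i, ?_⟩
  conv_lhs => rw [← b.sum_repr (v - w)]
  simp only [Finset.smul_sum, smul_smul, Int.mul_ediv_cancel' (hdvd _)]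

theorem ncard_fiber_parityClass_le [Fintype ι] (b : Basis ι ℤ M) {S T : Set M}
    (hT : T.Finite) (hST : ∀ x ∈ S, ∀ y ∈ S, ∀ u, x - y = (2 : ℤ) • u → u ∈ T) (c : ι → ZMod 2) :
    {x ∈ S | parityClass b x = c}.ncard ≤ T.ncard := by
  rcases Set.eq_empty_or_nonempty {x ∈ S | parityClass b x = c} with hempty | ⟨y, hyS, hy⟩
  · simp [hempty]
  have exists_half : ∀ x ∈ {x ∈ S | parityClass b x = c}, ∃ u, x - y = (2 : ℤ) • u :=
    fun x hx => exists_sub_eq_two_zsmul_of_parityClass_eq b (hx.2.trans hy.symm)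
  choose! u hu using exists_half
  refine Set.ncard_le_ncard_of_injOn u (fun x hx => hST x hx.1 y hyS _ (hu x hx)) ?_ hT
  intro x hx x' hx' hxx'
  rw [← sub_left_inj (a := y), hu x hx, hu x' hx', hxx']

theorem ncard_le_two_pow_mul_ncard [Fintype ι] (b : Basis ι ℤ M) {S T : Set M}
    (hT : T.Finite) (hST : ∀ x ∈ S, ∀ y ∈ S, ∀ u, x - y = (2 : ℤ) • u → u ∈ T) :
    S.ncard ≤ 2 ^ Fintype.card ι * T.ncard := by
  classical
  rcases S.finite_or_infinite with hS | hS
  · have hfiber : ∀ c ∈ (Finset.univ : Finset (ι → ZMod 2)),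
        #{x ∈ hS.toFinset | parityClass b x = c} ≤ T.ncard := fun c _ => by
      rw [← Set.ncard_coe_finset, Finset.coe_filter]
      simp only [Set.Finite.mem_toFinset]
      exact ncard_fiber_parityClass_le b hT hST c
    calc S.ncard = #hS.toFinset := Set.ncard_eq_toFinset_card S hS
      _ ≤ T.ncard * #(Finset.univ : Finset (ι → ZMod 2)) :=
        Finset.card_le_mul_card_image_of_maps_to (fun _ _ => Finset.mem_univ _) _ hfiber
      _ = 2 ^ Fintype.card ι * T.ncard := by simp [mul_comm]
  · simp [hS.ncard]

end Parity

theorem Convex.mem_of_sub_eq_two_zsmul {E : Type*} [AddCommGroup E] [Module ℝ E] {K : Set E}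
    (hconv : Convex ℝ K) (hsym : ∀ y ∈ K, -y ∈ K) {x y u : E} (hx : x ∈ K) (hy : y ∈ K)
    (h : x - y = (2 : ℤ) • u) : u ∈ K := by
  have hu : u = (1 / 2 : ℝ) • x + (1 / 2 : ℝ) • -y := by
    rw [smul_neg, ← sub_eq_add_neg, ← smul_sub, h, ← Int.cast_smul_eq_zsmul ℝ, smul_smul]
    norm_num
  rw [hu]
  exact hconv hx (hsym y hy) (by norm_num) (by norm_num) (by norm_num)

theorem ncard_le_two_pow_finrank_mul_ncard {E : Type*} [AddCommGroup E] [Module ℝ E]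
    (Λ : Submodule ℤ E) [Module.Free ℤ Λ] [Module.Finite ℤ Λ] {K S : Set E}
    (hconv : Convex ℝ K) (hsym : ∀ y ∈ K, -y ∈ K) (hSK : S ⊆ K)
    (hSΛ : ∀ x ∈ S, ∀ y ∈ S, x - y ∈ Λ) (hfin : (K ∩ Λ).Finite) :
    S.ncard ≤ 2 ^ finrank ℤ Λ * (K ∩ Λ).ncard := by
  rcases S.eq_empty_or_nonempty with rfl | ⟨x₀, hx₀⟩
  · simp
  let shift : Λ → E := fun u => x₀ + u
  have hshift : Function.Injective shift := fun u v huv =>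
    Subtype.ext (add_left_cancel huv)
  have hS : S ⊆ Set.range shift := fun x hx =>
    ⟨⟨x - x₀, hSΛ x hx x₀ hx₀⟩, add_sub_cancel x₀ x⟩
  rw [← Set.ncard_preimage_of_injective_subset_range hshift hS,
    ← Set.ncard_preimage_of_injective_subset_range Subtype.val_injective
      (fun x hx => ⟨⟨x, hx.2⟩, rfl⟩ : K ∩ Λ ⊆ Set.range ((↑) : Λ → E))]
  have hcard := ncard_le_two_pow_mul_ncard (Module.finBasis ℤ Λ)
    (S := shift ⁻¹' S) (T := (↑) ⁻¹' (K ∩ Λ))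
    (hfin.preimage Subtype.val_injective.injOn) fun x hx y hy u hxy => by
      refine ⟨hconv.mem_of_sub_eq_two_zsmul hsym (hSK hx) (hSK hy) ?_, u.2⟩
      simp only [shift, add_sub_add_left_eq_sub, ← Submodule.coe_sub, hxy, Submodule.coe_smul]
  simpa using hcard

-- `ℤⁿ` as a `ZSpan`, so that its discreteness and `ZSpan.setFinite_inter` are available.
abbrev intLattice (n : ℕ) : Submodule ℤ (Fin n → ℝ) :=
  span ℤ (Set.range (Pi.basisFun ℝ (Fin n)))

theorem coe_intLattice (n : ℕ) :
    (intLattice n : Set (Fin n → ℝ)) = {x : Fin n → ℝ | ∀ i, ∃ z : ℤ, x i = (z : ℝ)} := by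
  ext x
  simp [Basis.mem_span_iff_repr_mem, eq_comm]

theorem discrete_brunn_general (n k : ℕ) (K : Set (Fin n → ℝ))
    (hconv : Convex ℝ K) (hcomp : IsCompact K) (hsym : K = -K)
    (L : Submodule ℝ (Fin n → ℝ))
    (hlat : Module.finrank ℝ
      (Submodule.span ℝ ((L : Set (Fin n → ℝ)) ∩ {x | ∀ i, ∃ z : ℤ, x i = (z : ℝ)})) = k)
    (t : Fin n → ℝ) :
    latCount (K ∩ ((fun x => t + x) '' (L : Set (Fin n → ℝ)))) ≤
      2 ^ k * latCount (K ∩ (L : Set (Fin n → ℝ))) := by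
  set Λ : Submodule ℤ (Fin n → ℝ) := L.restrictScalars ℤ ⊓ intLattice n
  have hΛ : (Λ : Set (Fin n → ℝ)) =
      (L : Set (Fin n → ℝ)) ∩ {x | ∀ i, ∃ z : ℤ, x i = (z : ℝ)} := by
    rw [coe_inf, coe_intLattice]; rfl
  have : DiscreteTopology Λ :=
    DiscreteTopology.of_subset (inferInstanceAs (DiscreteTopology (intLattice n))) inf_le_right
  have hrank : finrank ℤ Λ = k := by
    have := Real.finrank_eq_int_finrank_of_discrete (s := (Λ : Set (Fin n → ℝ))) (by rwa [span_eq])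
    rw [Set.finrank, Set.finrank, span_eq, hΛ, hlat] at this
    exact this.symm
  have hfin : (K ∩ Λ).Finite := (ZSpan.setFinite_inter _ hcomp.isBounded).subset
    (Set.inter_subset_inter_right _ inf_le_right)
  unfold latCount
  rw [Set.inter_assoc K (L : Set _), ← hΛ, ← hrank]
  refine ncard_le_two_pow_finrank_mul_ncard Λ hconv
    (fun y hy => by rw [hsym, Set.neg_mem_neg]; exact hy)
    (Set.inter_subset_left.trans Set.inter_subset_left) ?_ hfin
  rintro _ ⟨⟨-, a, ha, rfl⟩, hx⟩ _ ⟨⟨-, c, hc, rfl⟩, hy⟩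
  rw [← coe_intLattice] at hx hy
  refine ⟨?_, sub_mem hx hy⟩
  simpa [add_sub_add_left_eq_sub] using sub_mem ha hc

/-- Discrete Brunn-type concavity principle: if `K ⊆ ℝ^n` is an origin-symmetric
convex body and `L` is a `k`-dimensional lattice subspace (`0 ≤ k ≤ n-1`), then for
any translation `t`, `#(K ∩ (t + L)) ≤ 2^k #(K ∩ L)`. -/
theorem discrete_brunn (n k : ℕ) (hk : k ≤ n - 1) (K : Set (Fin n → ℝ))
    (hconv : Convex ℝ K) (hcomp : IsCompact K) (hne : K.Nonempty) (hsym : K = -K)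
    (L : Submodule ℝ (Fin n → ℝ)) (hL : Module.finrank ℝ L = k)
    (hlat : Module.finrank ℝ
      (Submodule.span ℝ ((L : Set (Fin n → ℝ)) ∩ {x | ∀ i, ∃ z : ℤ, x i = (z : ℝ)})) = k)
    (t : Fin n → ℝ) :
    latCount (K ∩ ((fun x => t + x) '' (L : Set (Fin n → ℝ)))) ≤
      2 ^ k * latCount (K ∩ (L : Set (Fin n → ℝ))) :=
  discrete_brunn_general n k K hconv hcomp hsym L hlat t
end

section
/- Let n ≥ 3. For every constant c > 0 there exists a convex body K ⊆ ℝ^n such that #(K)^{n-1} < c^n · ∏_{i=1}^n #(K ∩ e_i^⊥); equivalently, #(K)^{(n-1)/n} < c (∏_{i=1}^n #(K ∩ e_i^⊥))^{1/n}. In particular, no constant c > 0 satisfies #(K)^{(n-1)/n} ≥ c (∏_{i=1}^n #(K ∩ e_i^⊥))^{1/n} for all convex bodies K ⊆ ℝ^n. -/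
open scoped BigOperators

/-! The tetrahedron `T` spanned by the skew segments `[0, m e₁]` and `[e₂, e₂ + m e₀]` contains only
the `2(m + 1)` lattice points of these two segments, because a lattice point of `T` has
`x₂ ∈ {0, 1}` and each of the two slices `x₂ = 0`, `x₂ = 1` of `T` is one of the segments.
Yet every coordinate hyperplane `eᵢ^⊥` contains a whole segment (the first one for `i ≠ 1`, the
second one for `i = 1`), so all `n` sections keep `m + 1` lattice points. Hence
`#(T)^(n-1) / ∏ᵢ #(T ∩ eᵢ^⊥) ≤ 2^(n-1) / (m + 1)`, which is eventually below `cⁿ`. -/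

open Finset

/-- `latCount A` is `(A ∩ intPoints (Fin n)).ncard` by definition. -/
def intPoints (ι : Type*) : Set (ι → ℝ) := {x | ∀ i, ∃ z : ℤ, x i = z}

section intPoints

variable {ι : Type*}

theorem single_intCast_mem_intPoints [DecidableEq ι] (i : ι) (z : ℤ) :
    Pi.single i (z : ℝ) ∈ intPoints ι := by
  intro j
  by_cases h : j = i
  · exact ⟨z, by simp [h]⟩
  · exact ⟨0, by simp [h]⟩

theorem add_mem_intPoints {x y : ι → ℝ} (hx : x ∈ intPoints ι) (hy : y ∈ intPoints ι) :
    x + y ∈ intPoints ι := by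
  intro i
  obtain ⟨a, ha⟩ := hx i
  obtain ⟨b, hb⟩ := hy i
  exact ⟨a + b, by simp [ha, hb]⟩

theorem exists_mem_Iic_natCast_eq {r : ℝ} (hr : ∃ z : ℤ, r = z) (h0 : 0 ≤ r) {m : ℕ}
    (hm : r ≤ m) :
    ∃ t ∈ Set.Iic m, (t : ℝ) = r := by
  obtain ⟨z, rfl⟩ := hr
  lift z to ℕ using (by exact_mod_cast h0)
  exact ⟨z, by exact_mod_cast hm, rfl⟩

end intPoints

/-- The tetrahedron spanned by the skew segments `[0, m e_b]` and `[e_c, e_c + m e_a]`. -/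
def skewTetrahedron {ι : Type*} (a b c : ι) (m : ℝ) : Set (ι → ℝ) :=
  {x | (∀ j, j ≠ a → j ≠ b → j ≠ c → x j = 0) ∧ 0 ≤ x c ∧ x c ≤ 1 ∧
    0 ≤ x a ∧ x a ≤ m * x c ∧ 0 ≤ x b ∧ x b ≤ m * (1 - x c)}

namespace skewTetrahedron

variable {ι : Type*} {a b c : ι} {m : ℝ}

theorem convex : Convex ℝ (skewTetrahedron a b c m) := by
  rintro x ⟨hx, hxc, hxc', hxa, hxa', hxb, hxb'⟩ y ⟨hy, hyc, hyc', hya, hya', hyb, hyb'⟩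
    s t hs ht hst
  refine ⟨fun j hja hjb hjc => by simp [hx j hja hjb hjc, hy j hja hjb hjc],
    ?_, ?_, ?_, ?_, ?_, ?_⟩ <;> simp only [Pi.add_apply, Pi.smul_apply, smul_eq_mul] <;>
    nlinarith [mul_nonneg hs hxc, mul_nonneg ht hyc]

theorem isClosed : IsClosed (skewTetrahedron a b c m) := by
  simp only [skewTetrahedron, Set.ofPred_and, Set.ofPred_forall]
  refine .inter (isClosed_iInter fun j => isClosed_iInter fun _ => isClosed_iInter fun _ =>
    isClosed_iInter fun _ => isClosed_eq (continuous_apply j) continuous_const) ?_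
  refine .inter ?_ (.inter ?_ (.inter ?_ (.inter ?_ (.inter ?_ ?_)))) <;>
    exact isClosed_le (by fun_prop) (by fun_prop)

theorem subset_Icc : skewTetrahedron a b c m ⊆ Set.Icc 0 (fun _ => |m| + 1) := by
  rintro x ⟨hx, hxc, hxc', hxa, hxa', hxb, hxb'⟩
  have hm : m ≤ |m| := le_abs_self m
  suffices ∀ j, 0 ≤ x j ∧ x j ≤ |m| + 1 from ⟨fun j => (this j).1, fun j => (this j).2⟩
  intro j
  by_cases hja : j = a
  · subst hja; constructor <;> nlinarith [abs_nonneg m]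
  by_cases hjb : j = b
  · subst hjb; constructor <;> nlinarith [abs_nonneg m]
  by_cases hjc : j = c
  · subst hjc; constructor <;> linarith [abs_nonneg m]
  rw [hx j hja hjb hjc]
  constructor <;> positivity

theorem isCompact [Fintype ι] : IsCompact (skewTetrahedron a b c m) :=
  Metric.isCompact_of_isClosed_isBounded isClosed ((Metric.isBounded_Icc _ _).subset subset_Icc)

theorem zero_mem (hm : 0 ≤ m) : (0 : ι → ℝ) ∈ skewTetrahedron a b c m := by
  simp [skewTetrahedron, hm]

section lattice

variable [DecidableEq ι]

theorem single_mem (hab : a ≠ b) (hbc : b ≠ c) {t : ℝ} (ht : 0 ≤ t) (htm : t ≤ m) :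
    Pi.single b t ∈ skewTetrahedron a b c m := by
  refine ⟨fun j _ hjb _ => by simp [hjb], ?_⟩
  simp [hab, hbc.symm, ht, htm]

theorem single_add_single_mem (hab : a ≠ b) (hac : a ≠ c) (hbc : b ≠ c) {s : ℝ} (hs : 0 ≤ s)
    (hsm : s ≤ m) :
    Pi.single c 1 + Pi.single a s ∈ skewTetrahedron a b c m := by
  refine ⟨fun j hja _ hjc => by simp [hja, hjc], ?_⟩
  simp [hab.symm, hac, hac.symm, hbc, hs, hsm]

theorem eq_single_of_apply_eq_zero (hab : a ≠ b) (hbc : b ≠ c) {x : ι → ℝ}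
    (hx : x ∈ skewTetrahedron a b c m) (hc0 : x c = 0) : x = Pi.single b (x b) := by
  obtain ⟨hx, -, -, hxa, hxa', -, -⟩ := hx
  have hxa0 : x a = 0 := le_antisymm (by simpa [hc0] using hxa') hxa
  ext j
  by_cases hja : j = a
  · subst hja; simp [hab, hxa0]
  by_cases hjb : j = b
  · subst hjb; simp
  by_cases hjc : j = c
  · subst hjc; simp [hbc.symm, hc0]
  simp [hjb, hx j hja hjb hjc]

theorem eq_single_add_single_of_apply_eq_one (hab : a ≠ b) (hac : a ≠ c) (hbc : b ≠ c)
    {x : ι → ℝ} (hx : x ∈ skewTetrahedron a b c m) (hc1 : x c = 1) :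
    x = Pi.single c 1 + Pi.single a (x a) := by
  obtain ⟨hx, -, -, -, -, hxb, hxb'⟩ := hx
  have hxb0 : x b = 0 := le_antisymm (by simpa [hc1] using hxb') hxb
  ext j
  by_cases hja : j = a
  · subst hja; simp [hac]
  by_cases hjb : j = b
  · subst hjb; simp [hab.symm, hbc, hxb0]
  by_cases hjc : j = c
  · subst hjc; simp [hac.symm, hc1]
  simp [hja, hjc, hx j hja hjb hjc]

def bottomEdgePoints (b : ι) (m : ℕ) : Set (ι → ℝ) :=
  (fun t : ℕ => Pi.single b (t : ℝ)) '' Set.Iic m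

def topEdgePoints (a c : ι) (m : ℕ) : Set (ι → ℝ) :=
  (fun s : ℕ => Pi.single c 1 + Pi.single a (s : ℝ)) '' Set.Iic m

theorem ncard_bottomEdgePoints (b : ι) (m : ℕ) : (bottomEdgePoints b m).ncard = m + 1 :=
  (Set.ncard_image_of_injective _ ((Pi.single_injective b).comp Nat.cast_injective)).trans
    (Set.ncard_Iic_nat m)

theorem ncard_topEdgePoints (a c : ι) (m : ℕ) : (topEdgePoints a c m).ncard = m + 1 :=
  (Set.ncard_image_of_injective _
    ((add_right_injective _).comp ((Pi.single_injective a).comp Nat.cast_injective))).trans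
    (Set.ncard_Iic_nat m)

theorem bottomEdgePoints_subset (hab : a ≠ b) (hbc : b ≠ c) (m : ℕ) :
    bottomEdgePoints b m ⊆ skewTetrahedron a b c m ∩ intPoints ι := by
  rintro _ ⟨t, ht, rfl⟩
  exact ⟨single_mem hab hbc (Nat.cast_nonneg t) (by exact_mod_cast ht),
    by simpa using single_intCast_mem_intPoints b t⟩

theorem topEdgePoints_subset (hab : a ≠ b) (hac : a ≠ c) (hbc : b ≠ c) (m : ℕ) :
    topEdgePoints a c m ⊆ skewTetrahedron a b c m ∩ intPoints ι := by
  rintro _ ⟨s, hs, rfl⟩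
  refine ⟨single_add_single_mem hab hac hbc (Nat.cast_nonneg s) (by exact_mod_cast hs),
    add_mem_intPoints ?_ ?_⟩
  · simpa using single_intCast_mem_intPoints c 1
  · simpa using single_intCast_mem_intPoints a s

theorem inter_intPoints_subset (hab : a ≠ b) (hac : a ≠ c) (hbc : b ≠ c) (m : ℕ) :
    skewTetrahedron a b c m ∩ intPoints ι ⊆ bottomEdgePoints b m ∪ topEdgePoints a c m := by
  rintro x ⟨hx, hxℤ⟩
  have ⟨_, hxc, hxc', hxa, hxa', hxb, hxb'⟩ := hx
  obtain ⟨k, hk, hxc_eq⟩ := exists_mem_Iic_natCast_eq (hxℤ c) hxc (m := 1) (by simpa using hxc')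
  rcases Nat.le_one_iff_eq_zero_or_eq_one.1 hk with rfl | rfl
  · rw [Nat.cast_zero] at hxc_eq
    obtain ⟨t, ht, hxb_eq⟩ := exists_mem_Iic_natCast_eq (hxℤ b) hxb (by simpa [← hxc_eq] using hxb')
    refine .inl ⟨t, ht, ?_⟩
    dsimp only
    rw [hxb_eq, ← eq_single_of_apply_eq_zero hab hbc hx hxc_eq.symm]
  · rw [Nat.cast_one] at hxc_eq
    obtain ⟨s, hs, hxa_eq⟩ := exists_mem_Iic_natCast_eq (hxℤ a) hxa (by simpa [← hxc_eq] using hxa')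
    refine .inr ⟨s, hs, ?_⟩
    dsimp only
    rw [hxa_eq, ← eq_single_add_single_of_apply_eq_one hab hac hbc hx hxc_eq.symm]

theorem finite_bottomEdgePoints_union_topEdgePoints (a b c : ι) (m : ℕ) :
    (bottomEdgePoints b m ∪ topEdgePoints a c m).Finite :=
  ((Set.finite_Iic m).image _).union ((Set.finite_Iic m).image _)

end lattice

section latCount

variable {n : ℕ} {a b c : Fin n}

theorem latCount_le (hab : a ≠ b) (hac : a ≠ c) (hbc : b ≠ c) (m : ℕ) :
    latCount (skewTetrahedron a b c m) ≤ 2 * (m + 1) :=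
  calc latCount (skewTetrahedron a b c m)
      ≤ (bottomEdgePoints b m ∪ topEdgePoints a c m).ncard :=
        Set.ncard_le_ncard (inter_intPoints_subset hab hac hbc m)
          (finite_bottomEdgePoints_union_topEdgePoints a b c m)
    _ ≤ (bottomEdgePoints b m).ncard + (topEdgePoints a c m).ncard := Set.ncard_union_le _ _
    _ = 2 * (m + 1) := by rw [ncard_bottomEdgePoints, ncard_topEdgePoints, two_mul]

theorem le_latCount_inter_hyperplane (hab : a ≠ b) (hac : a ≠ c) (hbc : b ≠ c) (m : ℕ)
    (i : Fin n) : m + 1 ≤ latCount (skewTetrahedron a b c m ∩ {x | x i = 0}) := by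
  have hfin : (skewTetrahedron a b c m ∩ {x | x i = 0} ∩ intPoints (Fin n)).Finite :=
    (finite_bottomEdgePoints_union_topEdgePoints a b c m).subset fun x hx =>
      inter_intPoints_subset hab hac hbc m ⟨hx.1.1, hx.2⟩
  by_cases hib : i = b
  · subst hib
    rw [← ncard_topEdgePoints a c m]
    refine Set.ncard_le_ncard (fun x hx => ?_) hfin
    obtain ⟨hxT, hxℤ⟩ := topEdgePoints_subset hab hac hbc m hx
    obtain ⟨s, -, rfl⟩ := hx
    exact ⟨⟨hxT, by simp [hab.symm, hbc]⟩, hxℤ⟩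
  · rw [← ncard_bottomEdgePoints b m]
    refine Set.ncard_le_ncard (fun x hx => ?_) hfin
    obtain ⟨hxT, hxℤ⟩ := bottomEdgePoints_subset hab hbc m hx
    obtain ⟨t, -, rfl⟩ := hx
    exact ⟨⟨hxT, by simp [hib]⟩, hxℤ⟩

end latCount

end skewTetrahedron

theorem pow_pred_lt_mul_prod {n : ℕ} (hn : n ≠ 0) {c N A : ℝ} {B : Fin n → ℝ} (hc : 0 < c)
    (hA : 0 ≤ A) (hAN : A ≤ 2 * N) (hBN : ∀ i, N ≤ B i) (hN : 2 ^ (n - 1) < c ^ n * N) :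
    A ^ (n - 1) < c ^ n * ∏ i, B i := by
  have hcn : 0 < c ^ n := pow_pos hc n
  have hN0 : 0 < N := pos_of_mul_pos_right ((pow_pos two_pos _).trans hN) hcn.le
  calc A ^ (n - 1) ≤ (2 * N) ^ (n - 1) := pow_le_pow_left₀ hA hAN _
    _ = 2 ^ (n - 1) * N ^ (n - 1) := mul_pow _ _ _
    _ < c ^ n * N * N ^ (n - 1) := by gcongr
    _ = c ^ n * N ^ n := by
      rw [mul_assoc, ← pow_succ', Nat.sub_add_cancel (Nat.one_le_iff_ne_zero.2 hn)]
    _ = c ^ n * ∏ _i : Fin n, N := by rw [prod_const, card_univ, Fintype.card_fin]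
    _ ≤ c ^ n * ∏ i, B i := by gcongr with i; exact hBN i

/-- In dimension `n ≥ 3` there is no discrete Meyer inequality for general convex
bodies: for every `c > 0` there is a convex body `K ⊆ ℝ^n` with
`#(K)^{n-1} < c^n ∏ᵢ #(K ∩ eᵢ^⊥)`. -/
theorem no_discrete_meyer_general (n : ℕ) (hn : 3 ≤ n) (c : ℝ) (hc : 0 < c) :
    ∃ K : Set (Fin n → ℝ), Convex ℝ K ∧ IsCompact K ∧ K.Nonempty ∧
      (latCount K : ℝ) ^ (n - 1) <
        c ^ n * ∏ i : Fin n, (latCount (K ∩ {x : Fin n → ℝ | x i = 0}) : ℝ) := by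
  let i₀ : Fin n := ⟨0, by omega⟩
  let i₁ : Fin n := ⟨1, by omega⟩
  let i₂ : Fin n := ⟨2, by omega⟩
  have h₀₁ : i₀ ≠ i₁ := by simp [i₀, i₁, Fin.ext_iff]
  have h₀₂ : i₀ ≠ i₂ := by simp [i₀, i₂, Fin.ext_iff]
  have h₁₂ : i₁ ≠ i₂ := by simp [i₁, i₂, Fin.ext_iff]
  obtain ⟨m, hm⟩ := exists_nat_gt (2 ^ (n - 1) / c ^ n)
  refine ⟨skewTetrahedron i₀ i₁ i₂ m, skewTetrahedron.convex, skewTetrahedron.isCompact,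
    ⟨0, skewTetrahedron.zero_mem m.cast_nonneg⟩, ?_⟩
  refine pow_pred_lt_mul_prod (N := m + 1) (by omega) hc (Nat.cast_nonneg _) ?_ (fun i => ?_) ?_
  · exact_mod_cast skewTetrahedron.latCount_le h₀₁ h₀₂ h₁₂ m
  · exact_mod_cast skewTetrahedron.le_latCount_inter_hyperplane h₀₁ h₀₂ h₁₂ m i
  · rw [mul_comm]
    exact (div_lt_iff₀ (pow_pos hc n)).1 (hm.trans (lt_add_one _))
end

section
/- Let n ≥ 1, let K ⊆ ℝ^n be an origin-symmetric convex body and let m ∈ ℕ, m ≥ 1. Then #(m K) ≤ 2^{n-1} · m^n · (#(K) + 1); in particular #(m K) ≤ (2m)^n · #(K). -/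
/-! Split the integer points of `m K` into the `(2m)^n` classes modulo `2m`. In a class, let `x₀`
be the lexicographically smallest point. Every point of the class is `x₀ + 2m p`, and
`p = ((x₀ + 2m p)/m - x₀/m)/2` is an integer point of `K` by convexity and symmetry. These `p`
are lexicographically nonnegative, so they and their negatives are integer points of `K` that
overlap only in `0`: a class has at most `#K` and at most `(#K + 1)/2` points. -/

open scoped BigOperators Pointwise

open Set Function

def latticePoints {ι : Type*} (A : Set (ι → ℝ)) : Set (ι → ℤ) :=
  (Int.castAddHom ℝ).compLeft ι ⁻¹' A

theorem latCount_eq_ncard_latticePoints {n : ℕ} (A : Set (Fin n → ℝ)) :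
    latCount A = (latticePoints A).ncard := by
  have hinj : Injective ((Int.castAddHom ℝ).compLeft (Fin n)) := fun z w h =>
    funext fun i => Int.cast_injective (congrFun h i)
  have hrange : range ((Int.castAddHom ℝ).compLeft (Fin n))
      = {x : Fin n → ℝ | ∀ i, ∃ z : ℤ, x i = (z : ℝ)} := by
    ext x
    constructor
    · rintro ⟨z, rfl⟩ i
      exact ⟨z i, rfl⟩
    · intro hx
      choose z hz using hx
      exact ⟨z, funext fun i => (hz i).symm⟩
  rw [latCount, latticePoints, ← hrange, ← image_preimage_eq_inter_range,
    ncard_image_of_injective _ hinj]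

theorem IsCompact.finite_latticePoints {ι : Type*} [Finite ι] {A : Set (ι → ℝ)}
    (hA : IsCompact A) : (latticePoints A).Finite :=
  ((Topology.IsClosedEmbedding.piMap fun _ : ι =>
    Int.isClosedEmbedding_coe_real).isCompact_preimage hA).finite_of_discrete

theorem latticePoints_neg {ι : Type*} (A : Set (ι → ℝ)) :
    latticePoints (-A) = -latticePoints A := by
  ext z
  simp [latticePoints, map_neg]

theorem Convex.inv_two_mul_smul_sub_mem {E : Type*} [AddCommGroup E] [Module ℝ E] {K : Set E}
    (hconv : Convex ℝ K) (hsym : K = -K) {c : ℝ} (hc : c ≠ 0) {x y : E}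
    (hx : x ∈ c • K) (hy : y ∈ c • K) : (2 * c)⁻¹ • (x - y) ∈ K := by
  rw [mem_smul_set_iff_inv_smul_mem₀ hc] at hx hy
  have hy' : -(c⁻¹ • y) ∈ K := by
    rw [hsym]
    exact neg_mem_neg.2 hy
  convert hconv hx hy' (by norm_num : (0 : ℝ) ≤ 1 / 2) (by norm_num : (0 : ℝ) ≤ 1 / 2)
    (by norm_num) using 1
  rw [mul_inv, smul_sub, smul_neg, ← sub_eq_add_neg, smul_smul, smul_smul, one_div]

theorem Set.two_mul_ncard_le_ncard_add_one {G : Type*} [AddGroup G] {P T : Set G}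
    (hT : T.Finite) (hPT : P ∪ -P ⊆ T) (hP : P ∩ -P ⊆ {0}) :
    2 * P.ncard ≤ T.ncard + 1 := by
  have hPfin : P.Finite := hT.subset (subset_union_left.trans hPT)
  calc 2 * P.ncard = (P ∪ -P).ncard + (P ∩ -P).ncard := by
        rw [ncard_union_add_ncard_inter _ _ hPfin hPfin.neg, ncard_neg, two_mul]
    _ ≤ T.ncard + 1 := add_le_add (ncard_le_ncard hPT hT)
        ((ncard_le_ncard hP (finite_singleton 0)).trans (ncard_singleton 0).le)

open Finset in
theorem Finset.mul_card_le_of_mul_card_fiber_le {α β : Type*} [Fintype β] [DecidableEq β]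
    (s : Finset α) (f : α → β) {a b : ℕ} (h : ∀ c, a * #{x ∈ s | f x = c} ≤ b) :
    a * #s ≤ Fintype.card β * b := by
  calc a * #s = ∑ c, a * #{x ∈ s | f x = c} := by
        rw [card_eq_sum_card_fiberwise fun x _ => mem_univ (f x), mul_sum]
    _ ≤ ∑ _c : β, b := sum_le_sum fun c _ => h c
    _ = Fintype.card β * b := by rw [sum_const, card_univ, smul_eq_mul]

theorem ncard_le_of_subset_latticePoints_smul_of_modEq {ι : Type*} [LinearOrder ι]
    [WellFoundedLT ι] {K : Set (ι → ℝ)} (hconv : Convex ℝ K) (hsym : K = -K)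
    (hK : (latticePoints K).Finite)
    {m : ℕ} (hm : m ≠ 0) {A : Set (ι → ℤ)} (hA : A ⊆ latticePoints ((m : ℝ) • K))
    (hAmod : ∀ z ∈ A, ∀ w ∈ A, ∀ i, z i ≡ w i [ZMOD 2 * m]) :
    A.ncard ≤ (latticePoints K).ncard ∧ 2 * A.ncard ≤ (latticePoints K).ncard + 1 := by
  obtain hAinf | hAfin := A.infinite_or_finite
  · simp [hAinf.ncard]
  rcases A.eq_empty_or_nonempty with rfl | hAne
  · simp
  obtain ⟨x₀, hx₀, hmin⟩ := A.exists_min_image toLex hAfin hAne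
  have h2m : (2 * m : ℤ) ≠ 0 := by positivity
  set e : (ι → ℤ) → (ι → ℤ) := fun p => x₀ + (2 * m : ℤ) • p
  have he : Injective e := (add_right_injective x₀).comp (smul_right_injective _ h2m)
  have hAe : A ⊆ range e := by
    intro z hz
    choose q hq using fun i => (hAmod x₀ hx₀ z hz i).dvd
    exact ⟨q, funext fun i => by simp [e, ← hq i]⟩
  set P := e ⁻¹' A
  have hcard : P.ncard = A.ncard := ncard_preimage_of_injective_subset_range he hAe
  have hPK : P ⊆ latticePoints K := by
    intro p hp
    set castVec := (Int.castAddHom ℝ).compLeft ι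
    have hmid := hconv.inv_two_mul_smul_sub_mem hsym (Nat.cast_ne_zero.2 hm) (hA hp) (hA hx₀)
    have hdiff : castVec (e p) - castVec x₀ = (2 * m : ℝ) • castVec p := by
      rw [map_add, add_sub_cancel_left, map_zsmul, ← Int.cast_smul_eq_zsmul ℝ]
      push_cast
      rfl
    rwa [hdiff, smul_smul, inv_mul_cancel₀ (by positivity), one_smul] at hmid
  have hPneg : P ∩ -P ⊆ {0} := by
    rintro p ⟨hp, hp'⟩
    have h₁ := hmin _ hp
    have h₂ := hmin _ hp'
    simp only [e, toLex_add, toLex_smul, smul_neg, toLex_neg, le_add_iff_nonneg_right] at h₁ h₂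
    have h0 : toLex ((2 * m : ℤ) • p) = toLex 0 := le_antisymm (neg_nonneg.1 h₂) h₁
    exact (smul_eq_zero.1 (toLex.injective h0)).resolve_left h2m
  have hPT : P ∪ -P ⊆ latticePoints K := by
    refine union_subset hPK ?_
    rw [hsym, latticePoints_neg]
    exact neg_subset_neg.2 hPK
  exact ⟨hcard ▸ ncard_le_ncard hPK hK, hcard ▸ two_mul_ncard_le_ncard_add_one hK hPT hPneg⟩

theorem ncard_latticePoints_smul_le {ι : Type*} [Fintype ι] [LinearOrder ι]
    {K : Set (ι → ℝ)} (hconv : Convex ℝ K) (hcomp : IsCompact K) (hsym : K = -K)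
    {m : ℕ} (hm : m ≠ 0) :
    (latticePoints ((m : ℝ) • K)).ncard
        ≤ (2 * m) ^ Fintype.card ι * (latticePoints K).ncard ∧
      2 * (latticePoints ((m : ℝ) • K)).ncard
        ≤ (2 * m) ^ Fintype.card ι * ((latticePoints K).ncard + 1) := by
  classical
  have : NeZero (2 * m) := ⟨by positivity⟩
  have hS := (hcomp.smul (m : ℝ)).finite_latticePoints
  have hK := hcomp.finite_latticePoints
  have hclasses : Fintype.card (ι → ZMod (2 * m)) = (2 * m) ^ Fintype.card ι := by
    rw [Fintype.card_fun, ZMod.card]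
  let residue : (ι → ℤ) → (ι → ZMod (2 * m)) := fun z i => z i
  have hfiber (c : ι → ZMod (2 * m)) := by
    refine ncard_le_of_subset_latticePoints_smul_of_modEq hconv hsym hK hm
      (A := ↑{z ∈ hS.toFinset | residue z = c}) ?_ ?_
    · intro z hz
      exact hS.mem_toFinset.1 (Finset.mem_filter.1 hz).1
    · intro z hz w hw i
      simp only [Finset.mem_coe, Finset.mem_filter] at hz hw
      have hmod := (ZMod.intCast_eq_intCast_iff _ _ (2 * m)).1 (congrFun (hz.2.trans hw.2.symm) i)
      exact_mod_cast hmod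
  simp only [ncard_coe_finset] at hfiber
  rw [ncard_eq_toFinset_card _ hS, ← hclasses]
  exact ⟨(one_mul _).symm.trans_le <| Finset.mul_card_le_of_mul_card_fiber_le _ residue
      fun c => (one_mul _).trans_le (hfiber c).1,
    Finset.mul_card_le_of_mul_card_fiber_le _ residue fun c => (hfiber c).2⟩

theorem latCount_dilate_general (n : ℕ) (K : Set (Fin n → ℝ))
    (hconv : Convex ℝ K) (hcomp : IsCompact K) (hsym : K = -K)
    (m : ℕ) (hm : 1 ≤ m) :
    latCount ((m : ℝ) • K) ≤ 2 ^ (n - 1) * m ^ n * (latCount K + 1) ∧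
    latCount ((m : ℝ) • K) ≤ (2 * m) ^ n * latCount K := by
  rw [latCount_eq_ncard_latticePoints, latCount_eq_ncard_latticePoints]
  obtain ⟨hcount, htwice⟩ := ncard_latticePoints_smul_le hconv hcomp hsym (m := m) (by omega)
  rw [Fintype.card_fin] at hcount htwice
  refine ⟨?_, hcount⟩
  have hpow : (2 * m) ^ n ≤ 2 * (2 ^ (n - 1) * m ^ n) := by
    rw [mul_pow, ← mul_assoc, ← pow_succ']
    exact Nat.mul_le_mul_right _ (Nat.pow_le_pow_right two_pos (by omega))
  have hbound := Nat.mul_le_mul_right ((latticePoints K).ncard + 1) hpow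
  rw [mul_assoc] at hbound
  omega

/-- Dilation bound for the lattice point enumerator of an origin-symmetric convex
body `K ⊆ ℝ^n` and `m ≥ 1`:
`#(mK) ≤ 2^{n-1} m^n (#(K)+1) ≤ (2m)^n #(K)`. -/
theorem latCount_dilate (n : ℕ) (hn : 1 ≤ n) (K : Set (Fin n → ℝ))
    (hconv : Convex ℝ K) (hcomp : IsCompact K) (hne : K.Nonempty) (hsym : K = -K)
    (m : ℕ) (hm : 1 ≤ m) :
    latCount ((m : ℝ) • K) ≤ 2 ^ (n - 1) * m ^ n * (latCount K + 1) ∧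
    latCount ((m : ℝ) • K) ≤ (2 * m) ^ n * latCount K :=
  latCount_dilate_general n K hconv hcomp hsym m hm
end

section
/- Let n ≥ 1, let K ⊆ ℝ^n be an origin-symmetric convex body and let v ∈ (K ∩ ℤ^n) \ {0}. Then |(K | v^⊥) ∩ (ℤ^n | v^⊥)| ≤ 6 · 4^{n-1} · |(K ∩ ℤ^n) | v^⊥|, where for a set A ⊆ ℝ^n, A | v^⊥ denotes the image of A under the orthogonal projection onto v^⊥. In particular, there is a universal constant c > 0 with |(K | v^⊥) ∩ (ℤ^n | v^⊥)| ≤ c^n · |(K ∩ ℤ^n) | v^⊥| for all such n, K, v. -/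
open scoped BigOperators

/-- The set of integer lattice points of `ℝ^n`. -/
def intLat (n : ℕ) : Set (Fin n → ℝ) := {x | ∀ i, ∃ z : ℤ, x i = (z : ℝ)}

/-- The orthogonal projection of `ℝ^n` onto the hyperplane `v^⊥`. -/
noncomputable def projPerp {n : ℕ} (v : Fin n → ℝ) : (Fin n → ℝ) → (Fin n → ℝ) :=
  fun x => x - ((∑ j, x j * v j) / ∑ j, v j * v j) • v

/-!
Every lattice point `y` of `K | v^⊥` lifts to a lattice point `w = x + s v` with `x ∈ K` and
`|s| ≤ 1` (round the coefficient of `v`). If two such lifts are congruent modulo `4ℤ^n`, then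
`(w₁ - w₂) / 4` is a lattice point, and it lies in `K` because it is the average of
`x₁, s₁ v, -x₂, -s₂ v ∈ K`; so `(y₁ - y₂) / 4 ∈ (K ∩ ℤ^n) | v^⊥`. Fixing one `y` per residue
class thus embeds `(K | v^⊥) ∩ (ℤ^n | v^⊥)` into `(ℤ/4)^n × ((K ∩ ℤ^n) | v^⊥)`, and
`4^n ≤ 6 · 4^(n-1)`.
-/

open Set

variable {n : ℕ}

noncomputable def projPerpₗ (v : Fin n → ℝ) : (Fin n → ℝ) →ₗ[ℝ] (Fin n → ℝ) where
  toFun := projPerp v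
  map_add' x y := by
    ext i
    simp only [projPerp, Pi.add_apply, Pi.sub_apply, Pi.smul_apply, smul_eq_mul, add_mul,
      Finset.sum_add_distrib]
    ring
  map_smul' c x := by
    ext i
    simp only [projPerp, Pi.smul_apply, Pi.sub_apply, smul_eq_mul, mul_assoc, ← Finset.mul_sum,
      RingHom.id_apply]
    ring

@[simp]
lemma coe_projPerpₗ (v : Fin n → ℝ) : ⇑(projPerpₗ v) = projPerp v := rfl

lemma projPerp_add_smul_self {v : Fin n → ℝ} (hv : v ≠ 0) (x : Fin n → ℝ) (t : ℝ) :
    projPerp v (x + t • v) = projPerp v x := by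
  have hvv : ∑ j, v j * v j ≠ 0 := fun h => hv (dotProduct_self_eq_zero.mp h)
  have hsum : ∑ j, (x + t • v) j * v j = ∑ j, x j * v j + t * ∑ j, v j * v j := by
    simp only [Pi.add_apply, Pi.smul_apply, smul_eq_mul, add_mul, Finset.sum_add_distrib,
      mul_assoc, Finset.mul_sum]
  simp only [projPerp, hsum, add_div, mul_div_cancel_right₀ _ hvv, add_smul]
  abel

lemma exists_eq_add_smul_of_projPerp_eq {v x y : Fin n → ℝ} (h : projPerp v x = projPerp v y) :
    ∃ t : ℝ, x = y + t • v := by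
  unfold projPerp at h
  exact ⟨(∑ j, x j * v j) / (∑ j, v j * v j) - (∑ j, y j * v j) / (∑ j, v j * v j),
    by linear_combination (norm := module) h⟩

lemma intLat_eq_span : intLat n = Submodule.span ℤ (range (Pi.basisFun ℝ (Fin n))) := by
  ext x
  simp [Module.Basis.mem_span_iff_repr_mem, intLat, eq_comm]

lemma Bornology.IsBounded.finite_inter_intLat {K : Set (Fin n → ℝ)} (hK : IsBounded K) :
    (K ∩ intLat n).Finite := by
  rw [intLat_eq_span]
  exact ZSpan.setFinite_inter _ hK

-- On `intLat n` this is the residue class modulo `q ℤ^n`.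
noncomputable def modClass (q : ℕ) (w : Fin n → ℝ) : Fin n → ZMod q := fun i => (⌊w i⌋ : ZMod q)

lemma inv_smul_sub_mem_intLat_of_modClass_eq {q : ℕ} [NeZero q] {w₁ w₂ : Fin n → ℝ}
    (hw₁ : w₁ ∈ intLat n) (hw₂ : w₂ ∈ intLat n) (h : modClass q w₁ = modClass q w₂) :
    (q : ℝ)⁻¹ • (w₁ - w₂) ∈ intLat n := by
  intro i
  obtain ⟨a, ha⟩ := hw₁ i
  obtain ⟨b, hb⟩ := hw₂ i
  have hab : (a : ZMod q) = b := by simpa [modClass, ha, hb] using congrFun h i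
  obtain ⟨k, hk⟩ := (ZMod.intCast_eq_intCast_iff_dvd_sub a b q).mp hab
  refine ⟨-k, ?_⟩
  simp only [Pi.smul_apply, Pi.sub_apply, smul_eq_mul, ha, hb]
  have hk' : (b : ℝ) - a = q * k := by exact_mod_cast hk
  rw [show (a : ℝ) - b = q * (-k : ℤ) by push_cast; linear_combination -hk']
  exact inv_mul_cancel_left₀ (NeZero.ne _) _

lemma exists_lift_mem_intLat {K : Set (Fin n → ℝ)} {v : Fin n → ℝ} (hv : v ∈ intLat n)
    (hv0 : v ≠ 0) {y : Fin n → ℝ} (hy : y ∈ projPerp v '' K ∩ projPerp v '' intLat n) :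
    ∃ x ∈ K, ∃ s : ℝ, |s| ≤ 1 ∧ x + s • v ∈ intLat n ∧ projPerp v (x + s • v) = y := by
  obtain ⟨⟨x, hxK, rfl⟩, z, hz, hzx⟩ := hy
  obtain ⟨t, rfl⟩ := exists_eq_add_smul_of_projPerp_eq hzx
  refine ⟨x, hxK, t - round t, (abs_sub_round t).trans (by norm_num), ?_,
    projPerp_add_smul_self hv0 x _⟩
  rw [intLat_eq_span, SetLike.mem_coe] at hz hv ⊢
  convert sub_mem hz (Submodule.smul_mem _ (round t) hv) using 1
  rw [← Int.cast_smul_eq_zsmul ℝ, sub_smul, add_sub_assoc]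

section Convex

variable {E : Type*} [AddCommGroup E] [Module ℝ E] {K : Set E}

lemma Convex.inv_four_smul_sub_mem (hconv : Convex ℝ K) (hsym : K = -K) {v x₁ x₂ : E}
    {s₁ s₂ : ℝ} (hv : v ∈ K) (hx₁ : x₁ ∈ K) (hx₂ : x₂ ∈ K) (hs₁ : |s₁| ≤ 1) (hs₂ : |s₂| ≤ 1) :
    (4 : ℝ)⁻¹ • ((x₁ + s₁ • v) - (x₂ + s₂ • v)) ∈ K := by
  have hbal : Balanced ℝ K := (balanced_iff_neg_mem hconv).mpr fun x hx => by
    rw [hsym]; simpa using hx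
  have hx : (1 / 2 : ℝ) • x₁ + (1 / 2 : ℝ) • (-x₂) ∈ K :=
    hconv hx₁ (hbal.neg_mem_iff.mpr hx₂) (by norm_num) (by norm_num) (by norm_num)
  have hs : ((s₁ - s₂) / 2) • v ∈ K := by
    refine hbal.smul_mem ?_ hv
    rw [Real.norm_eq_abs, abs_div, abs_two, div_le_one two_pos]
    exact (abs_sub _ _).trans (by linarith)
  convert hconv hx hs (by norm_num : (0 : ℝ) ≤ 1 / 2) (by norm_num : (0 : ℝ) ≤ 1 / 2)
    (by norm_num) using 1
  module

end Convex

lemma Set.ncard_le_card_mul_ncard_of_smul_sub_mem {𝕜 F C : Type*} [Field 𝕜] [AddCommGroup F]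
    [Module 𝕜 F] [Fintype C] {T S : Set F} (hS : S.Finite) (κ : F → C) {a : 𝕜} (ha : a ≠ 0)
    (h : ∀ y₁ ∈ T, ∀ y₂ ∈ T, κ y₁ = κ y₂ → a • (y₁ - y₂) ∈ S) :
    T.ncard ≤ Fintype.card C * S.ncard := by
  classical
  let base : C → F := Function.invFunOn κ T
  have hbase : ∀ y ∈ T, base (κ y) ∈ T ∧ κ (base (κ y)) = κ y := fun y hy =>
    ⟨Function.invFunOn_mem ⟨y, hy, rfl⟩, Function.invFunOn_eq ⟨y, hy, rfl⟩⟩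
  let f : F → C × F := fun y => (κ y, a • (y - base (κ y)))
  have hmaps : ∀ y ∈ T, f y ∈ (univ : Set C) ×ˢ S := fun y hy =>
    ⟨mem_univ _, h y hy _ (hbase y hy).1 (hbase y hy).2.symm⟩
  have hinj : InjOn f T := by
    intro y₁ _ y₂ _ hf
    simp only [f, Prod.mk.injEq] at hf
    obtain ⟨hκ, hy⟩ := hf
    rw [hκ] at hy
    exact sub_left_injective (smul_right_injective F ha hy)
  calc T.ncard ≤ ((univ : Set C) ×ˢ S).ncard :=
        ncard_le_ncard_of_injOn f hmaps hinj (finite_univ.prod hS)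
    _ = Fintype.card C * S.ncard := by rw [ncard_prod, ncard_univ, Nat.card_eq_fintype_card]

lemma ncard_projPerp_inter_le {K : Set (Fin n → ℝ)} (hconv : Convex ℝ K) (hcomp : IsCompact K)
    (hsym : K = -K) {v : Fin n → ℝ} (hv : v ∈ K ∩ intLat n) (hv0 : v ≠ 0) :
    (projPerp v '' K ∩ projPerp v '' intLat n).ncard ≤
      4 ^ n * (projPerp v '' (K ∩ intLat n)).ncard := by
  have hS : (projPerp v '' (K ∩ intLat n)).Finite :=
    hcomp.isBounded.finite_inter_intLat.image _
  have hlift : ∀ y ∈ projPerp v '' K ∩ projPerp v '' intLat n, ∃ x ∈ K, ∃ s : ℝ, |s| ≤ 1 ∧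
      x + s • v ∈ intLat n ∧ projPerp v (x + s • v) = y :=
    fun y hy => exists_lift_mem_intLat hv.2 hv0 hy
  choose! x hxK s hs hw hπ using hlift
  refine (ncard_le_card_mul_ncard_of_smul_sub_mem hS (fun y => modClass 4 (x y + s y • v))
    (a := (4 : ℝ)⁻¹) (by norm_num) ?_).trans_eq
    (by rw [Fintype.card_fun, ZMod.card, Fintype.card_fin])
  intro y₁ hy₁ y₂ hy₂ hclass
  have hlat : ((4 : ℕ) : ℝ)⁻¹ • ((x y₁ + s y₁ • v) - (x y₂ + s y₂ • v)) ∈ intLat n :=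
    inv_smul_sub_mem_intLat_of_modClass_eq (hw y₁ hy₁) (hw y₂ hy₂) hclass
  refine ⟨_, ⟨hconv.inv_four_smul_sub_mem hsym hv.1 (hxK y₁ hy₁) (hxK y₂ hy₂) (hs y₁ hy₁)
    (hs y₂ hy₂), by exact_mod_cast hlat⟩, ?_⟩
  rw [← coe_projPerpₗ, map_smul, map_sub, coe_projPerpₗ, hπ y₁ hy₁, hπ y₂ hy₂]

theorem projection_count_general (n : ℕ) (K : Set (Fin n → ℝ))
    (hconv : Convex ℝ K) (hcomp : IsCompact K) (hsym : K = -K)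
    (v : Fin n → ℝ) (hv : v ∈ K ∩ intLat n) (hv0 : v ≠ 0) :
    ((projPerp v '' K) ∩ (projPerp v '' intLat n)).ncard ≤
        6 * 4 ^ (n - 1) * (projPerp v '' (K ∩ intLat n)).ncard ∧
      ∃ c : ℝ, 0 < c ∧ ∀ m : ℕ, 1 ≤ m → ∀ K' : Set (Fin m → ℝ),
        Convex ℝ K' → IsCompact K' → K'.Nonempty → K' = -K' →
        ∀ v' : Fin m → ℝ, v' ∈ K' ∩ intLat m → v' ≠ 0 →
          (((projPerp v' '' K') ∩ (projPerp v' '' intLat m)).ncard : ℝ) ≤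
            c ^ m * ((projPerp v' '' (K' ∩ intLat m)).ncard : ℝ) := by
  have hpow : 4 ^ n ≤ 6 * 4 ^ (n - 1) := by
    cases n with
    | zero => norm_num
    | succ k => rw [pow_succ', Nat.add_sub_cancel]; omega
  refine ⟨(ncard_projPerp_inter_le hconv hcomp hsym hv hv0).trans
    (Nat.mul_le_mul_right _ hpow), 4, by norm_num, ?_⟩
  intro m _ K' hconv' hcomp' _ hsym' v' hv' hv0'
  exact_mod_cast ncard_projPerp_inter_le hconv' hcomp' hsym' hv' hv0'

/-- Projection-counting lemma: if `K ⊆ ℝ^n` is an origin-symmetric convex body and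
`v ∈ (K ∩ ℤ^n) \ {0}`, then
`|(K|v^⊥) ∩ (ℤ^n|v^⊥)| ≤ 6·4^{n-1} |(K ∩ ℤ^n)|v^⊥|`; in particular there is a
universal constant `c > 0` with `|(K|v^⊥) ∩ (ℤ^n|v^⊥)| ≤ c^n |(K ∩ ℤ^n)|v^⊥|`
for all such `n`, `K` and `v`. -/
theorem projection_count (n : ℕ) (hn : 1 ≤ n) (K : Set (Fin n → ℝ))
    (hconv : Convex ℝ K) (hcomp : IsCompact K) (hne : K.Nonempty) (hsym : K = -K)
    (v : Fin n → ℝ) (hv : v ∈ K ∩ intLat n) (hv0 : v ≠ 0) :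
    ((projPerp v '' K) ∩ (projPerp v '' intLat n)).ncard ≤
        6 * 4 ^ (n - 1) * (projPerp v '' (K ∩ intLat n)).ncard ∧
      ∃ c : ℝ, 0 < c ∧ ∀ m : ℕ, 1 ≤ m → ∀ K' : Set (Fin m → ℝ),
        Convex ℝ K' → IsCompact K' → K'.Nonempty → K' = -K' →
        ∀ v' : Fin m → ℝ, v' ∈ K' ∩ intLat m → v' ≠ 0 →
          (((projPerp v' '' K') ∩ (projPerp v' '' intLat m)).ncard : ℝ) ≤
            c ^ m * ((projPerp v' '' (K' ∩ intLat m)).ncard : ℝ) :=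
  projection_count_general n K hconv hcomp hsym v hv hv0
end

section
/- Let n ≥ 2, let u = (1, 2, 4, …, 2^{n-1})ᵀ ∈ ℝ^n, let C_n = [-1, 1]^n and let K = conv((C_n ∩ u^⊥) ∪ {e_n, -e_n}). Then e_n ∈ K, the projection of K onto e_n^⊥ satisfies |(K | e_n^⊥) ∩ (ℤ^n | e_n^⊥)| = 3^{n-1}, and (K ∩ ℤ^n) | e_n^⊥ = {0}. -/
open scoped BigOperators

/-- The vector `u = (1, 2, 4, …, 2^{n-1})`. -/
def uvec (n : ℕ) : Fin n → ℝ := fun i => 2 ^ (i : ℕ)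

/-- The cube `C_n = [-1, 1]^n`. -/
def cubeC (n : ℕ) : Set (Fin n → ℝ) := {x | ∀ i, |x i| ≤ 1}

/-- The `n`-th standard unit vector `eₙ` (last coordinate). -/
def lastUnit (n : ℕ) : Fin n → ℝ := fun i => if (i : ℕ) = n - 1 then 1 else 0

/-- The body `K = conv((C_n ∩ u^⊥) ∪ {±eₙ})`. -/
noncomputable def Kex (n : ℕ) : Set (Fin n → ℝ) :=
  convexHull ℝ ((cubeC n ∩ {x | ∑ i, x i * uvec n i = 0}) ∪ {lastUnit n, -lastUnit n})

/-!
Projecting along `eₙ` forgets the last coordinate. For `x` in the cube with `xₙ = 0`, the point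
`x + t eₙ` with `t = -⟨x, u⟩ / 2^{n-1}` lies in `u^⊥`, and `|t| ≤ 1` because
`|⟨x, u⟩| ≤ 2^{n-1} - 1`; so all `3^{n-1}` sign vectors are projections of points of `K`.
Conversely every generator of `K`, hence every point of `K`, satisfies
`2^{n-1} |xᵢ| + |⟨x, u⟩| ≤ 2^{n-1}` for `i < n`. A lattice point of `K` with some `xᵢ = ±1`,
`i < n`, therefore lies in `u^⊥` with coordinates in `{-1, 0, 1}`: a signed binary expansion of
`0`, which must vanish.
-/

open Function

lemma lastUnit_succ (m : ℕ) : lastUnit (m + 1) = Pi.single (Fin.last m) 1 := by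
  ext i
  simp [lastUnit, Pi.single_apply, Fin.ext_iff]

lemma projPerp_single {n : ℕ} (k : Fin n) :
    projPerp (Pi.single k 1) = fun x => update x k 0 := by
  ext x i
  rcases eq_or_ne i k with rfl | hi
  · simp [projPerp, Pi.single_apply]
  · simp [projPerp, hi]

lemma cubeC_eq_closedBall (n : ℕ) : cubeC n = Metric.closedBall 0 1 := by
  ext x
  simp [cubeC, pi_norm_le_iff_of_nonneg]

lemma Kex_subset_cubeC (n : ℕ) : Kex n ⊆ cubeC n := by
  refine convexHull_min ?_ (cubeC_eq_closedBall n ▸ convex_closedBall 0 1)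
  have hlast : lastUnit n ∈ cubeC n := fun i => by unfold lastUnit; split_ifs <;> simp
  rintro x (hx | rfl | rfl)
  · exact hx.1
  · exact hlast
  · simpa [cubeC] using hlast

lemma zero_mem_Kex (n : ℕ) : (0 : Fin n → ℝ) ∈ Kex n :=
  subset_convexHull ℝ _ (Or.inl ⟨fun i => by simp, by simp⟩)

lemma convex_setOf_abs_add_abs_le {E : Type*} [AddCommGroup E] [Module ℝ E]
    (f g : E →ₗ[ℝ] ℝ) (r : ℝ) : Convex ℝ {x | |f x| + |g x| ≤ r} := by
  have habs : ConvexOn ℝ Set.univ (fun t : ℝ => |t|) := convexOn_norm convex_univ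
  simpa using ((habs.comp_linearMap f).add (habs.comp_linearMap g)).convex_le r

lemma Kex_subset_setOf_abs_add_abs_le (m : ℕ) {i : Fin (m + 1)} (hi : i ≠ Fin.last m) :
    Kex (m + 1) ⊆ {x | |2 ^ m * x i| + |∑ j, x j * uvec (m + 1) j| ≤ 2 ^ m} := by
  have hconv := convex_setOf_abs_add_abs_le ((2 : ℝ) ^ m • LinearMap.proj i)
    (dotProductBilin ℝ ℝ (uvec (m + 1))) (2 ^ m)
  simp only [LinearMap.smul_apply, LinearMap.proj_apply, smul_eq_mul,
    dotProductBilin_apply_apply] at hconv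
  refine convexHull_min ?_ ?_
  · rw [lastUnit_succ]
    rintro x (⟨hx, hperp⟩ | rfl | rfl)
    · simp only [Set.mem_ofPred_eq] at hperp ⊢
      rw [hperp, abs_mul]
      simpa using mul_le_mul_of_nonneg_left (hx i) (by positivity : (0 : ℝ) ≤ 2 ^ m)
    · simp [hi, uvec, Pi.single_apply]
    · simp [hi, uvec, Pi.single_apply]
  · simpa [dotProduct, mul_comm] using hconv

theorem eq_zero_of_sum_mul_two_pow_eq_zero :
    ∀ {m : ℕ} {z : Fin m → ℤ}, (∀ j, |z j| ≤ 1) → ∑ j, z j * 2 ^ (j : ℕ) = 0 → z = 0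
  | 0, _, _, _ => Subsingleton.elim _ _
  | m + 1, z, hz, hsum => by
    rw [Fin.sum_univ_succ] at hsum
    have hsplit : z 0 + 2 * ∑ j : Fin m, z j.succ * 2 ^ (j : ℕ) = 0 := by
      simpa [pow_succ, Finset.mul_sum, mul_comm, mul_left_comm] using hsum
    have h0 : z 0 = 0 := by
      have := abs_le.mp (hz 0)
      omega
    have htail : z ∘ Fin.succ = 0 :=
      eq_zero_of_sum_mul_two_pow_eq_zero (fun j => hz j.succ) (by simpa [h0] using hsplit)
    ext j
    exact Fin.cases h0 (fun j => congrFun htail j) j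

lemma abs_sum_mul_two_pow_le {m : ℕ} {x : Fin m → ℝ} (hx : ∀ j, |x j| ≤ 1) :
    |∑ j, x j * 2 ^ (j : ℕ)| ≤ 2 ^ m - 1 := by
  calc |∑ j, x j * 2 ^ (j : ℕ)| ≤ ∑ j, |x j * 2 ^ (j : ℕ)| := Finset.abs_sum_le_sum_abs _ _
    _ ≤ ∑ j : Fin m, (2 : ℝ) ^ (j : ℕ) := by
      refine Finset.sum_le_sum fun j _ => ?_
      rw [abs_mul, abs_pow, abs_two]
      exact mul_le_of_le_one_left (by positivity) (hx j)
    _ = 2 ^ m - 1 := by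
      rw [Fin.sum_univ_eq_sum_range (fun j => (2 : ℝ) ^ j), geom_sum_eq (by norm_num)]
      norm_num

lemma intCast_mem_signs_of_abs_le_one {z : ℤ} (hz : |(z : ℝ)| ≤ 1) :
    (z : ℝ) ∈ ({-1, 0, 1} : Finset ℝ) := by
  have : |z| ≤ 1 := by exact_mod_cast (Int.cast_abs (R := ℝ) ▸ hz)
  obtain ⟨hl, hu⟩ := abs_le.mp this
  interval_cases z <;> simp

lemma abs_le_one_and_exists_int_of_mem_signs {r : ℝ} (hr : r ∈ ({-1, 0, 1} : Finset ℝ)) :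
    |r| ≤ 1 ∧ ∃ z : ℤ, r = z := by
  simp only [Finset.mem_insert, Finset.mem_singleton] at hr
  rcases hr with rfl | rfl | rfl
  exacts [⟨by norm_num, -1, by simp⟩, ⟨by norm_num, 0, by simp⟩, ⟨by norm_num, 1, by simp⟩]

/-- `{-1, 0, 1}^m × {0}`. -/
noncomputable def signBox (m : ℕ) : Finset (Fin (m + 1) → ℝ) :=
  Fintype.piFinset (update (fun _ => {-1, 0, 1}) (Fin.last m) {0})

lemma card_signBox (m : ℕ) : (signBox m).card = 3 ^ m := by
  have hsigns : ({-1, 0, 1} : Finset ℝ).card = 3 := by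
    rw [Finset.card_insert_of_notMem (by norm_num), Finset.card_pair (by norm_num)]
  rw [signBox, Fintype.card_piFinset, Fin.prod_univ_castSucc]
  simp [Fin.castSucc_ne_last, hsigns]

lemma exists_update_last_mem_cubeC_inter_perp {m : ℕ} {y : Fin (m + 1) → ℝ}
    (hy : ∀ i, |y i| ≤ 1) :
    ∃ t, update y (Fin.last m) t ∈ cubeC (m + 1) ∩ {x | ∑ i, x i * uvec (m + 1) i = 0} := by
  set s := ∑ j : Fin m, y j.castSucc * 2 ^ (j : ℕ)
  have hs : |s| ≤ 2 ^ m - 1 := abs_sum_mul_two_pow_le fun j => hy _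
  refine ⟨-s / 2 ^ m, fun i => ?_, ?_⟩
  · rcases eq_or_ne i (Fin.last m) with rfl | hi
    · rw [update_self, abs_div, abs_neg, abs_pow, abs_two, div_le_one (by positivity)]
      linarith
    · rw [update_of_ne hi]
      exact hy i
  · simp only [Set.mem_ofPred_eq, Fin.sum_univ_castSucc, uvec]
    simp [Fin.castSucc_ne_last, s]

lemma eq_zero_of_mem_Kex_inter_intLat {m : ℕ} {x : Fin (m + 1) → ℝ}
    (hx : x ∈ Kex (m + 1) ∩ intLat (m + 1)) {i : Fin (m + 1)} (hi : i ≠ Fin.last m) :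
    x i = 0 := by
  obtain ⟨hK, hL⟩ := hx
  choose z hz using hL
  have hzabs : ∀ j, |z j| ≤ 1 := fun j => by
    have := Kex_subset_cubeC _ hK j
    rw [hz j, ← Int.cast_abs] at this
    exact_mod_cast this
  by_cases hperp : ∑ j, x j * uvec (m + 1) j = 0
  · have hsum : ∑ j, z j * 2 ^ (j : ℕ) = 0 := by
      have : ((∑ j, z j * 2 ^ (j : ℕ) : ℤ) : ℝ) = 0 := by
        push_cast
        simpa [hz, uvec] using hperp
      exact_mod_cast this
    simp [hz i, eq_zero_of_sum_mul_two_pow_eq_zero hzabs hsum]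
  · have hbound := Kex_subset_setOf_abs_add_abs_le m hi hK
    rw [Set.mem_ofPred_eq, abs_mul, abs_pow, abs_two] at hbound
    have hlt : |(z i : ℝ)| < 1 := by
      rw [← hz i, ← mul_lt_iff_lt_one_right (by positivity : (0 : ℝ) < 2 ^ m)]
      linarith [abs_pos.mpr hperp]
    rw [← Int.cast_abs] at hlt
    simp [hz i, Int.abs_lt_one_iff.mp (by exact_mod_cast hlt)]

lemma projPerp_lastUnit_image_Kex_inter_intLat (m : ℕ) :
    projPerp (lastUnit (m + 1)) '' (Kex (m + 1) ∩ intLat (m + 1)) = {0} := by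
  rw [lastUnit_succ, projPerp_single]
  refine Set.eq_singleton_iff_unique_mem.mpr
    ⟨⟨0, ⟨zero_mem_Kex _, fun i => ⟨0, by simp⟩⟩, by simp⟩, ?_⟩
  rintro _ ⟨x, hx, rfl⟩
  ext i
  rcases eq_or_ne i (Fin.last m) with rfl | hi
  · simp
  · simpa [hi] using eq_zero_of_mem_Kex_inter_intLat hx hi

lemma projPerp_lastUnit_image_Kex_inter_image_intLat (m : ℕ) :
    projPerp (lastUnit (m + 1)) '' Kex (m + 1) ∩ projPerp (lastUnit (m + 1)) '' intLat (m + 1) =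
      signBox m := by
  rw [lastUnit_succ, projPerp_single]
  ext y
  simp only [Set.mem_inter_iff, Set.mem_image, signBox, Fintype.coe_piFinset, Set.mem_pi,
    Set.mem_univ, Finset.mem_coe, forall_const]
  constructor
  · rintro ⟨⟨x, hxK, rfl⟩, w, hw, hxw⟩ i
    rcases eq_or_ne i (Fin.last m) with rfl | hi
    · simp
    · have hxi : x i = w i := by simpa [hi] using congrFun hxw.symm i
      obtain ⟨z, hz⟩ := hw i
      rw [update_of_ne hi, update_of_ne hi, hxi, hz]
      exact intCast_mem_signs_of_abs_le_one (hz ▸ hxi ▸ Kex_subset_cubeC _ hxK i)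
  · intro hy
    have hylast : y (Fin.last m) = 0 := by simpa using hy (Fin.last m)
    have hsigns : ∀ i, |y i| ≤ 1 ∧ ∃ z : ℤ, y i = z := fun i => by
      rcases eq_or_ne i (Fin.last m) with rfl | hi
      · exact ⟨by simp [hylast], 0, by simp [hylast]⟩
      · exact abs_le_one_and_exists_int_of_mem_signs (by simpa [hi] using hy i)
    have hfix : update y (Fin.last m) 0 = y := by rw [← hylast, update_eq_self]
    obtain ⟨t, ht⟩ := exists_update_last_mem_cubeC_inter_perp fun i => (hsigns i).1
    exact ⟨⟨_, subset_convexHull ℝ _ (Or.inl ht), by rw [update_idem, hfix]⟩,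
      y, fun i => (hsigns i).2, hfix⟩

/-- A body showing that the projection-counting lemma is essentially sharp:
`eₙ ∈ K`, the projection of `K` onto `eₙ^⊥` contains `3^{n-1}` points of the
projected lattice, yet the lattice points of `K` project onto the origin only. -/
theorem projection_count_sharp (n : ℕ) (hn : 2 ≤ n) :
    lastUnit n ∈ Kex n ∧
    ((projPerp (lastUnit n) '' Kex n) ∩ (projPerp (lastUnit n) '' intLat n)).ncard =
      3 ^ (n - 1) ∧
    projPerp (lastUnit n) '' (Kex n ∩ intLat n) = {0} := by
  obtain ⟨m, rfl⟩ : ∃ m, n = m + 1 := ⟨n - 1, by omega⟩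
  refine ⟨subset_convexHull ℝ _ (Or.inr (Set.mem_insert _ _)), ?_,
    projPerp_lastUnit_image_Kex_inter_intLat m⟩
  rw [projPerp_lastUnit_image_Kex_inter_image_intLat, Set.ncard_coe_finset, card_signBox,
    Nat.add_sub_cancel]
end

section
/- Let n ≥ 2 and for an integer h ≥ 1 let K_h = conv(([-1,1]^{n-1} × {0}) ∪ {h e_n, -h e_n}) ⊆ ℝ^n be the double pyramid over the cube [-1,1]^{n-1}. Then #(K_h) = 3^{n-1} + 2h, #(K_h ∩ e_i^⊥) = 3^{n-2} + 2h for 1 ≤ i ≤ n-1, #(K_h ∩ e_n^⊥) = 3^{n-1}, and consequently lim_{h → ∞} #(K_h)^{n-1} / (∏_{i=1}^n #(K_h ∩ e_i^⊥)) = 3^{-(n-1)}. -/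
open scoped BigOperators

/-- The cube `[-1,1]^{n-1} × {0}` in the hyperplane `eₙ^⊥ ⊆ ℝ^n`. -/
def cubeSlice (n : ℕ) : Set (Fin n → ℝ) :=
  {x | (∀ i : Fin n, (i : ℕ) < n - 1 → |x i| ≤ 1) ∧ ∀ i : Fin n, (i : ℕ) = n - 1 → x i = 0}

/-- The apex `h·eₙ`. -/
def apexVec (n h : ℕ) : Fin n → ℝ := fun i => if (i : ℕ) = n - 1 then (h : ℝ) else 0

/-- The double pyramid `K_h = conv(([-1,1]^{n-1} × {0}) ∪ {± h eₙ})`. -/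
noncomputable def Kh (n h : ℕ) : Set (Fin n → ℝ) :=
  convexHull ℝ (cubeSlice n ∪ {apexVec n h, -apexVec n h})

/-!
Every point of `K_h` satisfies `h |x_i| + |x_n| ≤ h` for `i < n`: these inequalities cut out a
convex set containing the cube and both apexes. For an integer point this leaves two cases:
`x_n = 0`, and then `|x_i| ≤ 1`; or `|x_n| ≥ 1`, which forces `x_i = 0` for `i < n` and
`|x_n| ≤ h`. All these points do lie in `K_h`, so the lattice points of `K_h` are the `3^{n-1}`
points of `{-1,0,1}^{n-1} × {0}` together with the `2h` points `z eₙ`, `0 < |z| ≤ h`. Cutting with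
`eᵢ^⊥` (`i < n`) freezes one cube coordinate, cutting with `eₙ^⊥` removes the axis points, and the
limit follows from `(3^{n-1} + 2h) / (3^{n-2} + 2h) → 1`.
-/

open Finset Filter Topology

section Lattice

variable {ι : Type*} [DecidableEq ι]

noncomputable def axisLattice (k : ι) (h : ℕ) : Finset (ι → ℝ) :=
  ((Icc (-h : ℤ) h).erase 0).map
    ⟨fun z : ℤ => Pi.single k (z : ℝ), (Pi.single_injective k).comp Int.cast_injective⟩

lemma mem_axisLattice {k : ι} {h : ℕ} {x : ι → ℝ} :
    x ∈ axisLattice k h ↔ ∃ z : ℤ, z ≠ 0 ∧ |z| ≤ h ∧ Pi.single k (z : ℝ) = x := by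
  simp [axisLattice, abs_le, and_assoc]

lemma card_axisLattice (k : ι) (h : ℕ) : #(axisLattice k h) = 2 * h := by
  rw [axisLattice, card_map, card_erase_of_mem (by simp), Int.card_Icc]
  omega

lemma filter_axisLattice_of_ne {k i : ι} (hik : i ≠ k) (h : ℕ) :
    (axisLattice k h).filter (· i = 0) = axisLattice k h := by
  refine filter_true_of_mem fun x hx => ?_
  obtain ⟨z, -, -, rfl⟩ := mem_axisLattice.1 hx
  simp [hik]

lemma filter_axisLattice_self (k : ι) (h : ℕ) :
    (axisLattice k h).filter (· k = 0) = ∅ := by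
  refine filter_false_of_mem fun x hx => ?_
  obtain ⟨z, hz, -, rfl⟩ := mem_axisLattice.1 hx
  simpa using hz

variable [Fintype ι]

noncomputable def cubeLattice (s : Finset ι) : Finset (ι → ℝ) :=
  Fintype.piFinset fun i => if i ∈ s then {-1, 0, 1} else {0}

lemma mem_cubeLattice {s : Finset ι} {x : ι → ℝ} :
    x ∈ cubeLattice s ↔ (∀ i ∈ s, x i = -1 ∨ x i = 0 ∨ x i = 1) ∧ ∀ i ∉ s, x i = 0 := by
  simp only [cubeLattice, Fintype.mem_piFinset]
  refine ⟨fun hx => ⟨fun i hi => ?_, fun i hi => ?_⟩, fun hx i => ?_⟩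
  · simpa [hi] using hx i
  · simpa [hi] using hx i
  · by_cases hi : i ∈ s
    · simpa [hi] using hx.1 i hi
    · simpa [hi] using hx.2 i hi

lemma card_cubeLattice (s : Finset ι) : #(cubeLattice s) = 3 ^ #s := by
  simp only [cubeLattice, Fintype.card_piFinset, apply_ite card]
  simp only [card_singleton, prod_ite_mem, univ_inter, prod_const]
  norm_num

lemma filter_cubeLattice (s : Finset ι) (i : ι) :
    (cubeLattice s).filter (· i = 0) = cubeLattice (s.erase i) := by
  ext x
  simp only [mem_filter, mem_cubeLattice, mem_erase]
  constructor
  · rintro ⟨⟨hs, hns⟩, hi⟩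
    exact ⟨fun j hj => hs j hj.2, fun j hj => by by_cases hji : j = i <;> grind⟩
  · rintro ⟨hs, hns⟩
    have hi : x i = 0 := hns i (by simp)
    exact ⟨⟨fun j hj => by by_cases hji : j = i <;> grind, fun j hj => hns j (by grind)⟩, hi⟩

lemma disjoint_cubeLattice_axisLattice {s : Finset ι} {k : ι} (hk : k ∉ s) (h : ℕ) :
    Disjoint (cubeLattice s) (axisLattice k h) := by
  refine disjoint_left.2 fun x hc ha => ?_
  obtain ⟨z, hz, -, rfl⟩ := mem_axisLattice.1 ha
  simpa [hz] using (mem_cubeLattice.1 hc).2 k hk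

end Lattice

lemma eq_neg_one_or_zero_or_one_of_mul_abs_le {c a : ℤ} (hc : 0 < c) (H : c * |a| ≤ c) :
    a = -1 ∨ a = 0 ∨ a = 1 := by
  have : |a| ≤ 1 := by nlinarith
  rw [abs_le] at this
  omega

lemma eq_zero_of_mul_abs_add_abs_le {c a b : ℤ} (hc : 0 < c) (hb : b ≠ 0)
    (H : c * |a| + |b| ≤ c) : a = 0 := by
  have := Int.one_le_abs hb
  exact Int.abs_lt_one_iff.1 (by nlinarith)

lemma latCount_eq_card {n : ℕ} {A : Set (Fin n → ℝ)} {s : Finset (Fin n → ℝ)}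
    (hA : A ∩ {x | ∀ i, ∃ z : ℤ, x i = z} = s) : latCount A = #s := by
  rw [latCount, hA, Set.ncard_coe_finset]

section Pyramid

variable {m h : ℕ}

lemma mem_cubeSlice {x : Fin (m + 1) → ℝ} :
    x ∈ cubeSlice (m + 1) ↔ (∀ i ≠ Fin.last m, |x i| ≤ 1) ∧ x (Fin.last m) = 0 := by
  have hlt (i : Fin (m + 1)) : (i : ℕ) < m ↔ i ≠ Fin.last m := by
    rw [Ne, Fin.ext_iff, Fin.val_last]; omega
  have heq (i : Fin (m + 1)) : (i : ℕ) = m ↔ i = Fin.last m := by rw [Fin.ext_iff, Fin.val_last]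
  simp only [cubeSlice, Set.mem_ofPred_eq, add_tsub_cancel_right, hlt, heq, forall_eq]

lemma apexVec_eq_single (m h : ℕ) : apexVec (m + 1) h = Pi.single (Fin.last m) (h : ℝ) := by
  ext i
  simp [apexVec, Pi.single_apply, Fin.ext_iff]

lemma convex_pyramid (m : ℕ) {c : ℝ} (hc : 0 ≤ c) :
    Convex ℝ {x : Fin (m + 1) → ℝ | ∀ i ≠ Fin.last m, c * |x i| + |x (Fin.last m)| ≤ c} := by
  intro x hx y hy a b ha hb hab i hi
  have abs_comb (u v : ℝ) : |a * u + b * v| ≤ a * |u| + b * |v| :=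
    (abs_add_le _ _).trans_eq (by rw [abs_mul, abs_mul, abs_of_nonneg ha, abs_of_nonneg hb])
  simp only [Pi.add_apply, Pi.smul_apply, smul_eq_mul]
  nlinarith [abs_comb (x i) (y i), abs_comb (x (Fin.last m)) (y (Fin.last m)), hx i hi, hy i hi]

lemma Kh_subset_pyramid (m h : ℕ) :
    Kh (m + 1) h ⊆ {x | ∀ i ≠ Fin.last m, h * |x i| + |x (Fin.last m)| ≤ h} := by
  refine convexHull_min ?_ (convex_pyramid m h.cast_nonneg)
  rw [apexVec_eq_single]
  rintro x (hx | rfl | rfl) i hi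
  · obtain ⟨hcube, hlast⟩ := mem_cubeSlice.1 hx
    rw [hlast, abs_zero, add_zero]
    exact mul_le_of_le_one_right h.cast_nonneg (hcube i hi)
  all_goals simp [hi]

lemma single_mem_Kh {z : ℤ} (hz : |z| ≤ h) : Pi.single (Fin.last m) (z : ℝ) ∈ Kh (m + 1) h := by
  have hseg : (z : ℝ) ∈ segment ℝ (-(h : ℝ)) h := by
    rw [segment_eq_Icc (by simp)]
    exact abs_le.1 (by exact_mod_cast hz)
  have := Set.mem_image_of_mem (LinearMap.single ℝ (fun _ => ℝ) (Fin.last m)).toAffineMap hseg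
  rw [image_segment] at this
  refine segment_subset_convexHull ?_ ?_ (by simpa using this)
  all_goals simp [apexVec_eq_single, Pi.single_neg]

lemma Kh_inter_lattice_subset (hm : 0 < m) (hh : 0 < h) :
    Kh (m + 1) h ∩ {x | ∀ i, ∃ z : ℤ, x i = z} ⊆
      ↑(cubeLattice (univ.erase (Fin.last m)) ∪ axisLattice (Fin.last m) h) := by
  rintro x ⟨hK, hZ⟩
  choose w hw using hZ
  obtain rfl : x = fun i => (w i : ℝ) := funext hw
  have H (i) (hi : i ≠ Fin.last m) : (h : ℤ) * |w i| + |w (Fin.last m)| ≤ h := by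
    exact_mod_cast Kh_subset_pyramid m h hK i hi
  have hh' : (0 : ℤ) < h := by exact_mod_cast hh
  rw [coe_union, Set.mem_union, mem_coe, mem_coe, mem_cubeLattice, mem_axisLattice]
  by_cases hz : w (Fin.last m) = 0
  · refine Or.inl ⟨fun i hi => ?_, fun i hi => ?_⟩
    · have := H i (ne_of_mem_erase hi)
      rw [hz, abs_zero, add_zero] at this
      rcases eq_neg_one_or_zero_or_one_of_mul_abs_le hh' this with h1 | h1 | h1 <;> simp [h1]
    · obtain rfl : i = Fin.last m := by simpa using hi
      simp [hz]
  · have h0 : (0 : Fin (m + 1)) ≠ Fin.last m := by simp [Fin.ext_iff]; omega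
    refine Or.inr ⟨w (Fin.last m), hz, by nlinarith [H 0 h0, abs_nonneg (w 0)], funext fun i => ?_⟩
    by_cases hi : i = Fin.last m
    · subst hi; simp
    · simp [hi, eq_zero_of_mul_abs_add_abs_le hh' hz (H i hi)]

lemma coe_subset_Kh_inter_lattice :
    ↑(cubeLattice (univ.erase (Fin.last m)) ∪ axisLattice (Fin.last m) h) ⊆
      Kh (m + 1) h ∩ {x | ∀ i, ∃ z : ℤ, x i = z} := by
  intro x hx
  rw [coe_union, Set.mem_union, mem_coe, mem_coe, mem_cubeLattice, mem_axisLattice] at hx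
  rcases hx with ⟨hs, hns⟩ | ⟨z, -, hz, rfl⟩
  · have hlast : x (Fin.last m) = 0 := hns _ (by simp)
    refine ⟨subset_convexHull ℝ _ (Or.inl (mem_cubeSlice.2 ⟨fun i hi => ?_, hlast⟩)), fun i => ?_⟩
    · rcases hs i (mem_erase.2 ⟨hi, mem_univ i⟩) with h1 | h1 | h1 <;> simp [h1]
    · by_cases hi : i = Fin.last m
      · exact ⟨0, by simp [hi, hlast]⟩
      · rcases hs i (mem_erase.2 ⟨hi, mem_univ i⟩) with h1 | h1 | h1
        exacts [⟨-1, by simp [h1]⟩, ⟨0, by simp [h1]⟩, ⟨1, by simp [h1]⟩]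
  · exact ⟨single_mem_Kh hz, fun i => ⟨(Pi.single (Fin.last m) z : Fin (m + 1) → ℤ) i, by
      by_cases hi : i = Fin.last m <;> simp [hi]⟩⟩

lemma Kh_inter_lattice (hm : 0 < m) (hh : 0 < h) :
    Kh (m + 1) h ∩ {x | ∀ i, ∃ z : ℤ, x i = z} =
      ↑(cubeLattice (univ.erase (Fin.last m)) ∪ axisLattice (Fin.last m) h) :=
  (Kh_inter_lattice_subset hm hh).antisymm coe_subset_Kh_inter_lattice

lemma latCount_Kh_inter_hyperplane (hm : 0 < m) (hh : 0 < h) (i : Fin (m + 1)) :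
    latCount (Kh (m + 1) h ∩ {x | x i = 0}) =
      #((cubeLattice (univ.erase (Fin.last m))).filter (· i = 0) ∪
        (axisLattice (Fin.last m) h).filter (· i = 0)) := by
  refine latCount_eq_card ?_
  rw [Set.inter_right_comm, Kh_inter_lattice hm hh, ← filter_union]
  ext x
  simp

lemma latCount_Kh (hm : 0 < m) (hh : 0 < h) : latCount (Kh (m + 1) h) = 3 ^ m + 2 * h := by
  rw [latCount_eq_card (Kh_inter_lattice hm hh),
    card_union_of_disjoint (disjoint_cubeLattice_axisLattice (by simp) h), card_cubeLattice,
    card_axisLattice, card_erase_of_mem (mem_univ _), card_univ, Fintype.card_fin,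
    add_tsub_cancel_right]

lemma latCount_Kh_inter_of_ne_last (hm : 0 < m) (hh : 0 < h) {i : Fin (m + 1)}
    (hi : i ≠ Fin.last m) :
    latCount (Kh (m + 1) h ∩ {x | x i = 0}) = 3 ^ (m - 1) + 2 * h := by
  rw [latCount_Kh_inter_hyperplane hm hh, filter_cubeLattice, filter_axisLattice_of_ne hi,
    card_union_of_disjoint (disjoint_cubeLattice_axisLattice (by simp) h), card_cubeLattice,
    card_axisLattice, card_erase_of_mem (by simpa using hi), card_erase_of_mem (mem_univ _),
    card_univ, Fintype.card_fin, add_tsub_cancel_right]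

lemma latCount_Kh_inter_last (hm : 0 < m) (hh : 0 < h) :
    latCount (Kh (m + 1) h ∩ {x | x (Fin.last m) = 0}) = 3 ^ m := by
  rw [latCount_Kh_inter_hyperplane hm hh, filter_cubeLattice, filter_axisLattice_self,
    union_empty, erase_idem, card_cubeLattice, card_erase_of_mem (mem_univ _), card_univ,
    Fintype.card_fin, add_tsub_cancel_right]

end Pyramid

lemma tendsto_add_div_add_atTop (a b : ℝ) :
    Tendsto (fun x : ℝ => (a + x) / (b + x)) atTop (𝓝 1) := by
  have hden : Tendsto (fun x : ℝ => b + x) atTop atTop :=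
    tendsto_atTop_add_const_left _ _ tendsto_id
  have := (tendsto_const_nhds (x := (1 : ℝ))).add (tendsto_const_nhds.div_atTop hden (a := a - b))
  rw [add_zero] at this
  refine this.congr' ?_
  filter_upwards [hden.eventually_gt_atTop 0] with x hx
  field_simp
  ring

lemma tendsto_latCount_ratio {m : ℕ} (hm : 0 < m) :
    Tendsto (fun h : ℕ => (latCount (Kh (m + 1) h) : ℝ) ^ m /
        ∏ i : Fin (m + 1), (latCount (Kh (m + 1) h ∩ {x | x i = 0}) : ℝ))
      atTop (𝓝 (3 ^ m)⁻¹) := by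
  have hlim := (((tendsto_add_div_add_atTop (3 ^ m) (3 ^ (m - 1))).comp
    (tendsto_natCast_atTop_atTop.const_mul_atTop two_pos)).pow m).mul_const ((3 : ℝ) ^ m)⁻¹
  rw [one_pow, one_mul] at hlim
  refine hlim.congr' ?_
  filter_upwards [eventually_gt_atTop 0] with h hh
  rw [Fin.prod_univ_castSucc, latCount_Kh_inter_last hm hh, latCount_Kh hm hh]
  simp only [latCount_Kh_inter_of_ne_last hm hh (Fin.castSucc_ne_last _), prod_const, card_univ,
    Fintype.card_fin, Function.comp_apply]
  push_cast
  rw [div_pow]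
  field_simp

/-- Lattice point counts for the double pyramid `K_h`: `#(K_h) = 3^{n-1} + 2h`,
`#(K_h ∩ eᵢ^⊥) = 3^{n-2} + 2h` for `i < n`, `#(K_h ∩ eₙ^⊥) = 3^{n-1}`, and
consequently `#(K_h)^{n-1} / ∏ᵢ #(K_h ∩ eᵢ^⊥) → 3^{-(n-1)}` as `h → ∞`. -/
theorem double_pyramid_counts (n : ℕ) (hn : 2 ≤ n) :
    (∀ h : ℕ, 1 ≤ h →
      latCount (Kh n h) = 3 ^ (n - 1) + 2 * h ∧
      (∀ i : Fin n, (i : ℕ) < n - 1 →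
        latCount (Kh n h ∩ {x : Fin n → ℝ | x i = 0}) = 3 ^ (n - 2) + 2 * h) ∧
      latCount (Kh n h ∩ {x : Fin n → ℝ | x ⟨n - 1, by omega⟩ = 0}) = 3 ^ (n - 1)) ∧
    Filter.Tendsto
      (fun h : ℕ => (latCount (Kh n h) : ℝ) ^ (n - 1) /
        ∏ i : Fin n, (latCount (Kh n h ∩ {x : Fin n → ℝ | x i = 0}) : ℝ))
      Filter.atTop (nhds (((3 : ℝ) ^ (n - 1))⁻¹)) := by
  obtain ⟨m, rfl⟩ : ∃ m, n = m + 1 := ⟨n - 1, by omega⟩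
  have hm : 0 < m := by omega
  have hlast : (⟨m + 1 - 1, by omega⟩ : Fin (m + 1)) = Fin.last m := Fin.ext (by simp)
  rw [hlast, add_tsub_cancel_right, show m + 1 - 2 = m - 1 by omega]
  refine ⟨fun h hh => ⟨latCount_Kh hm hh, fun i hi => ?_, latCount_Kh_inter_last hm hh⟩,
    tendsto_latCount_ratio hm⟩
  exact latCount_Kh_inter_of_ne_last hm hh (by rintro rfl; simp at hi)
end

section
/- Let n ≥ 2, let C_n = [-1,1]^n and let u = (1, 2, 4, …, 2^{n-1})ᵀ ∈ ℝ^n. Then #(C_n ∩ u^⊥) = 1 (the only lattice point of C_n on the hyperplane u^⊥ is the origin), while #(C_n ∩ {x ∈ ℝ^n : ⟨x, u⟩ = 1}) = n. -/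
open scoped BigOperators

/-!
A lattice point of `C_n` on the slice `⟨x, u⟩ = c` is a signed binary expansion
`c = ∑ xᵢ 2^i` with digits `xᵢ ∈ {-1, 0, 1}`. Reading off the lowest digit, `x₀ ≡ c (mod 2)`
and the remaining digits expand `(c - x₀) / 2`. For `c = 0` this forces every digit to vanish;
for `c = 1` either `x₀ = 1` and the rest expands `0`, or `x₀ = -1` and the rest expands `1`,
so the expansions of `1` are `2^k - 2^(k-1) - ⋯ - 1`, one for each `k < n`.
-/

theorem latCount_eq_ncard_intCast_preimage {n : ℕ} (A : Set (Fin n → ℝ)) :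
    latCount A = {f : Fin n → ℤ | (fun i => (f i : ℝ)) ∈ A}.ncard := by
  let cast : (Fin n → ℤ) → Fin n → ℝ := fun f i => (f i : ℝ)
  have cast_injective : Function.Injective cast := fun f g h =>
    funext fun i => Int.cast_injective (congrFun h i)
  have range_cast : Set.range cast = {x | ∀ i, ∃ z : ℤ, x i = (z : ℝ)} := by
    ext x
    constructor
    · rintro ⟨f, rfl⟩ i
      exact ⟨f i, rfl⟩
    · intro hx
      choose f hf using hx
      exact ⟨f, funext fun i => (hf i).symm⟩
  rw [latCount, ← range_cast, ← Set.image_preimage_eq_inter_range,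
    Set.ncard_image_of_injective _ cast_injective]
  rfl

def signedBinary (n : ℕ) (c : ℤ) : Set (Fin n → ℤ) :=
  {f | (∀ i, |f i| ≤ 1) ∧ ∑ i, f i * 2 ^ (i : ℕ) = c}

theorem intCast_preimage_cube_inter_slice (n : ℕ) (c : ℤ) :
    {f : Fin n → ℤ | (fun i => (f i : ℝ)) ∈ {x : Fin n → ℝ | ∀ i, |x i| ≤ 1} ∩
        {x : Fin n → ℝ | ∑ i, x i * 2 ^ (i : ℕ) = c}} = signedBinary n c := by
  ext f
  simp only [Set.mem_ofPred_eq, Set.mem_inter_iff, signedBinary]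
  norm_cast

theorem sum_mul_two_pow_cons {R : Type*} [CommSemiring R] {n : ℕ} (a : R) (g : Fin n → R) :
    ∑ i, (Fin.cons a g : Fin (n + 1) → R) i * 2 ^ (i : ℕ)
      = a + 2 * ∑ i, g i * 2 ^ (i : ℕ) := by
  rw [Fin.sum_univ_succ, Finset.mul_sum]
  simp only [Fin.cons_zero, Fin.cons_succ, Fin.val_zero, Fin.val_succ, pow_zero, mul_one,
    pow_succ]
  congr 1
  exact Finset.sum_congr rfl fun i _ => by ring

theorem cons_mem_signedBinary_iff {n : ℕ} {c a : ℤ} {g : Fin n → ℤ} :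
    (Fin.cons a g : Fin (n + 1) → ℤ) ∈ signedBinary (n + 1) c
      ↔ |a| ≤ 1 ∧ ∃ d, g ∈ signedBinary n d ∧ a + 2 * d = c := by
  simp only [signedBinary, Set.mem_ofPred_eq, Fin.forall_fin_succ, Fin.cons_zero, Fin.cons_succ,
    sum_mul_two_pow_cons, and_assoc, exists_and_left, exists_eq_left']

theorem signedBinary_zero : ∀ n, signedBinary n 0 = {0}
  | 0 => Set.eq_singleton_iff_unique_mem.mpr
      ⟨⟨finZeroElim, rfl⟩, fun _ _ => funext finZeroElim⟩
  | n + 1 => by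
    ext f
    induction f using Fin.consCases with
    | _ a g =>
      rw [cons_mem_signedBinary_iff, Set.mem_singleton_iff]
      constructor
      · rintro ⟨ha, d, hg, had⟩
        obtain ⟨rfl, rfl⟩ : a = 0 ∧ d = 0 := by
          have := abs_le.mp ha
          omega
        rw [signedBinary_zero n, Set.mem_singleton_iff] at hg
        rw [hg]
        exact Matrix.cons_zero_zero
      · intro h
        obtain ⟨rfl, rfl⟩ := Matrix.cons_eq_zero_iff.mp h
        exact ⟨by norm_num, 0, by rw [signedBinary_zero n]; rfl, by norm_num⟩

def signedBinaryOne (n : ℕ) (k : Fin n) : Fin n → ℤ :=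
  fun i => if i = k then 1 else if i < k then -1 else 0

theorem signedBinaryOne_zero (n : ℕ) :
    signedBinaryOne (n + 1) 0 = Fin.cons 1 0 := by
  funext i
  induction i using Fin.cases <;> simp [signedBinaryOne, Fin.succ_ne_zero]

theorem signedBinaryOne_succ {n : ℕ} (k : Fin n) :
    signedBinaryOne (n + 1) k.succ = Fin.cons (-1) (signedBinaryOne n k) := by
  funext i
  induction i using Fin.cases <;> simp [signedBinaryOne, (Fin.succ_ne_zero k).symm]

theorem signedBinaryOne_injective (n : ℕ) : Function.Injective (signedBinaryOne n) := by
  intro k l h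
  by_contra hkl
  have := congrFun h k
  simp only [signedBinaryOne, if_neg hkl] at this
  split_ifs at this <;> omega

theorem signedBinary_one : ∀ n, signedBinary n 1 = Set.range (signedBinaryOne n)
  | 0 => by
    ext f
    simp [signedBinary]
  | n + 1 => by
    ext f
    induction f using Fin.consCases with
    | _ a g =>
      rw [cons_mem_signedBinary_iff, Set.mem_range, Fin.exists_fin_succ, signedBinaryOne_zero]
      simp only [signedBinaryOne_succ, Fin.cons_inj]
      constructor
      · rintro ⟨ha, d, hg, had⟩
        obtain ⟨rfl, rfl⟩ | ⟨rfl, rfl⟩ : a = 1 ∧ d = 0 ∨ a = -1 ∧ d = 1 := by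
          have := abs_le.mp ha
          omega
        · rw [signedBinary_zero n, Set.mem_singleton_iff] at hg
          exact Or.inl ⟨rfl, hg.symm⟩
        · rw [signedBinary_one n] at hg
          obtain ⟨k, hk⟩ := hg
          exact Or.inr ⟨k, rfl, hk⟩
      · rintro (⟨rfl, rfl⟩ | ⟨k, rfl, rfl⟩)
        · exact ⟨by norm_num, 0, by rw [signedBinary_zero n]; rfl, by norm_num⟩
        · exact ⟨by norm_num, 1, by rw [signedBinary_one n]; exact ⟨k, rfl⟩, by norm_num⟩

theorem cube_skew_slices_general (n : ℕ) :
    latCount ({x : Fin n → ℝ | ∀ i, |x i| ≤ 1} ∩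
        {x : Fin n → ℝ | ∑ i, x i * 2 ^ (i : ℕ) = 0}) = 1 ∧
    latCount ({x : Fin n → ℝ | ∀ i, |x i| ≤ 1} ∩
        {x : Fin n → ℝ | ∑ i, x i * 2 ^ (i : ℕ) = 1}) = n := by
  have count_slice (c : ℤ) := by
    simpa only [intCast_preimage_cube_inter_slice] using
      latCount_eq_ncard_intCast_preimage
        ({x : Fin n → ℝ | ∀ i, |x i| ≤ 1} ∩ {x | ∑ i, x i * 2 ^ (i : ℕ) = c})
  constructor
  · simpa [signedBinary_zero] using count_slice 0
  · simpa [signedBinary_one, Set.ncard_range_of_injective (signedBinaryOne_injective n)]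
      using count_slice 1

/-- For the cube `C_n = [-1,1]^n` and `u = (1, 2, 4, …, 2^{n-1})`, the central slice
`C_n ∩ u^⊥` contains only the origin as a lattice point, while the parallel slice at
level `1` contains exactly `n` lattice points. -/
theorem cube_skew_slices (n : ℕ) (hn : 2 ≤ n) :
    latCount ({x : Fin n → ℝ | ∀ i, |x i| ≤ 1} ∩
        {x : Fin n → ℝ | ∑ i, x i * 2 ^ (i : ℕ) = 0}) = 1 ∧
    latCount ({x : Fin n → ℝ | ∀ i, |x i| ≤ 1} ∩
        {x : Fin n → ℝ | ∑ i, x i * 2 ^ (i : ℕ) = 1}) = n :=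
  cube_skew_slices_general n
end
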